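/- (Dormant right gaps pruning is sound.) Let ⟨v_n,…,v₁⟩ be a right order on a subset of V with dormant set containing a node h. Suppose for some k ≤ n, the score of the right order ⟨v_n,…,v_k, h, v_{k-1},…,v₁⟩ (inserting h into the visible order) is strictly greater than ŝ(h, all other nodes of V) + score(⟨v_n,…,v₁⟩), i.e. strictly greater than the score of h when it may take all remaining nodes as parents plus the score of the original right order. Then no globally optimal full order of V has ⟨v_n,…,v₁⟩ as its last-n suffix. -/
import Mathlib

open Finset

noncomputable def shat {V : Type*} [DecidableEq V] (σ : V → Finset V → ℝ) (v : V) (S : Finset V) : ℝ :=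
  S.powerset.sup' S.powerset_nonempty (σ v)

noncomputable def scoreL {V : Type*} [DecidableEq V] (σ : V → Finset V → ℝ) : List V → Finset V → ℝ
  | [], _ => 0
  | v :: t, D => shat σ v (t.toFinset ∪ D) + scoreL σ t D

noncomputable def sstar {V : Type*} [DecidableEq V] (σ : V → Finset V → ℝ) (A B : Finset V) : ℝ :=
  sSup ((fun l => scoreL σ l B) '' {l : List V | l.Nodup ∧ l.toFinset = A})

lemma shat_mono {V : Type*} [DecidableEq V] (σ : V → Finset V → ℝ) (v : V)
    {S T : Finset V} (hST : S ⊆ T) : shat σ v S ≤ shat σ v T :=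
  Finset.sup'_mono _ (Finset.powerset_mono.mpr hST) _

lemma scoreL_mono {V : Type*} [DecidableEq V] (σ : V → Finset V → ℝ) (u : List V)
    {D D' : Finset V} (hD : D ⊆ D') : scoreL σ u D ≤ scoreL σ u D' := by
  induction u with
  | nil => simp [scoreL]
  | cons a t ih =>
    simp only [scoreL]
    exact add_le_add (shat_mono σ a (Finset.union_subset_union_right hD)) ih

lemma scoreL_append {V : Type*} [DecidableEq V] (σ : V → Finset V → ℝ) (a b : List V)
    (D : Finset V) : scoreL σ (a ++ b) D = scoreL σ a (b.toFinset ∪ D) + scoreL σ b D := by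
  induction a with
  | nil => simp [scoreL]
  | cons v t ih =>
    show shat σ v ((t ++ b).toFinset ∪ D) + scoreL σ (t ++ b) D = _
    rw [ih, List.toFinset_append, Finset.union_assoc]
    simp only [scoreL]
    ring

lemma scoreL_erase {V : Type*} [DecidableEq V] [Fintype V] (σ : V → Finset V → ℝ)
    (h : V) (u : List V) (D : Finset V) (hmem : h ∈ u) (hnd : u.Nodup) (hD : h ∉ D) :
    scoreL σ u D ≤ shat σ h (Finset.univ \ {h}) + scoreL σ (u.erase h) (insert h D) := by
  induction u with
  | nil => simp at hmem
  | cons a t ih =>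
    by_cases hah : a = h
    · subst hah
      rw [List.erase_cons_head]
      simp only [scoreL]
      have h1 : shat σ a (t.toFinset ∪ D) ≤ shat σ a (Finset.univ \ {a}) := by
        apply shat_mono
        intro x hx
        simp only [Finset.mem_sdiff, Finset.mem_univ, Finset.mem_singleton, true_and]
        rintro rfl
        rcases Finset.mem_union.mp hx with hx | hx
        · exact (List.nodup_cons.mp hnd).1 (List.mem_toFinset.mp hx)
        · exact hD hx
      have h2 : scoreL σ t D ≤ scoreL σ t (insert a D) :=
        scoreL_mono σ t (Finset.subset_insert _ _)
      linarith
    · have hht : h ∈ t := by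
        rcases List.mem_cons.mp hmem with rfl | ht
        · exact absurd rfl hah
        · exact ht
      rw [List.erase_cons_tail (by simp [hah])]
      simp only [scoreL]
      have h1 : shat σ a (t.toFinset ∪ D) ≤ shat σ a ((t.erase h).toFinset ∪ insert h D) := by
        apply shat_mono
        intro x hx
        rcases Finset.mem_union.mp hx with hx | hx
        · by_cases hxh : x = h
          · exact Finset.mem_union_right _ (by simp [hxh])
          · refine Finset.mem_union_left _ ?_
            rw [List.mem_toFinset] at hx ⊢
            exact (List.mem_erase_of_ne hxh).mpr hx
        · exact Finset.mem_union_right _ (Finset.mem_insert_of_mem hx)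
      have h2 := ih hht (List.nodup_cons.mp hnd).2
      linarith

/-- Dormant right gaps pruning is sound: if inserting a dormant node h at some
position inside the right order scores strictly more than ŝ(h, V\{h}) plus the
score of the right order, then no optimal full order has this right order as a
suffix. -/
theorem dormant_right_gap_pruning {V : Type*} [DecidableEq V] [Fintype V]
    (σ : V → Finset V → ℝ) (l : List V) (hnd : l.Nodup)
    (h : V) (hdormant : h ∉ l.toFinset)
    (hins : ∃ k : ℕ, 1 ≤ k ∧ k ≤ l.length ∧
      shat σ h (Finset.univ \ {h}) + scoreL σ l ∅ < scoreL σ (l.insertIdx k h) ∅) :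
    ∀ w : List V, w.Nodup → w.toFinset = Finset.univ →
      (∀ w' : List V, w'.Nodup → w'.toFinset = Finset.univ →
        scoreL σ w' ∅ ≤ scoreL σ w ∅) →
      ¬ (l <:+ w) := by
  rintro w hwnd hwfin hopt ⟨u, rfl⟩
  obtain ⟨k, hk1, hk2, hscore⟩ := hins
  have hinsperm : List.Perm (l.insertIdx k h) (h :: l) := List.perm_insertIdx h l hk2
  have hhu : h ∈ u := by
    have : h ∈ u ++ l := by
      rw [← List.mem_toFinset, hwfin]; exact Finset.mem_univ h
    rcases List.mem_append.mp this with hu | hl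
    · exact hu
    · exact absurd (List.mem_toFinset.mpr hl) hdormant
  have huperm : List.Perm u (h :: u.erase h) := List.perm_cons_erase hhu
  set w' : List V := u.erase h ++ l.insertIdx k h with hw'
  have hperm : List.Perm w' (u ++ l) :=
    ((List.Perm.append_left _ hinsperm).trans List.perm_middle).trans
      ((huperm.symm).append_right l)
  have hw'nd : w'.Nodup := hperm.nodup_iff.mpr hwnd
  have hw'fin : w'.toFinset = Finset.univ := (List.toFinset_eq_of_perm _ _ hperm).trans hwfin
  -- score computations
  have hsw : scoreL σ (u ++ l) ∅ = scoreL σ u l.toFinset + scoreL σ l ∅ := by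
    rw [scoreL_append]; simp
  have hfin2 : (l.insertIdx k h).toFinset = insert h l.toFinset := by
    simpa using List.toFinset_eq_of_perm _ _ hinsperm
  have hsw' : scoreL σ w' ∅ =
      scoreL σ (u.erase h) (insert h l.toFinset) + scoreL σ (l.insertIdx k h) ∅ := by
    rw [hw', scoreL_append, hfin2, Finset.union_empty]
  have hkey := scoreL_erase σ h u l.toFinset hhu (List.nodup_append.mp hwnd).1 hdormant
  have := hopt w' hw'nd hw'fin
  have hlt : scoreL σ (u ++ l) ∅ < scoreL σ w' ∅ := by
    rw [hsw, hsw']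
    linarith
  linarith
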